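/- arXiv:2504.10379 — 3 statements merged into one kernel-verified Lean document; each statement's English description precedes it below -/
import Mathlib

section
/- Deterministic delocalization criterion. Let d, n ≥ 1 be integers, Λ ⊂ ℤ^d finite, Π ⊆ Ω^Λ, s : ℤ^d → ℝ^n with s_v = 0 for v ∉ Λ, and let η, ζ : ℤ^d × ℝ^n → ℝ be environments. Suppose: φ^η ∈ Ω^Λ minimizes H^{η,Λ} over Ω^Λ; φ⁺ ∈ Ω^Λ minimizes H^{ζ^s,Λ} over Ω^Λ; φ⁻ ∈ Ω^Λ minimizes H^{ζ^{−s},Λ} over Ω^Λ; ψ_η ∈ Π minimizes H^{η,Λ} over Π; ψ_ζ ∈ Π minimizes H^{ζ,Λ} over Π; ρ⁺ ∈ Π minimizes H^{ζ^s,Λ} over Π; and ρ⁻ ∈ Π minimizes H^{ζ^{−s},Λ} over Π. Set Δ₁ := H^{η,Λ}(ψ_η) − H^{ζ,Λ}(ψ_ζ) and Δ₃ := (1/2)·(φ⁺ − φ⁻, −Δ_Λ s), and let Δ₂ ∈ ℝ satisfy H^{ζ,Λ}(χ) − H^{η,Λ}(χ) ≥ Δ₂ for every χ ∈ (Π + s)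 ∪ (Π − s), where Π ± s := {χ ± s : χ ∈ Π}. If Δ₁ + Δ₂ + Δ₃ > ‖∇s‖²_Λ, then φ⁺ ∉ Π or φ⁻ ∉ Π or φ^η ∉ Π. -/
open MeasureTheory ProbabilityTheory

noncomputable section

/-- Vertices of the lattice `ℤ^d`. -/
abbrev Vert (d : ℕ) := Fin d → ℤ

/-- Points of `ℝ^n` with the Euclidean norm. -/
abbrev Pt (n : ℕ) := EuclideanSpace ℝ (Fin n)

/-- Nearest-neighbour adjacency on `ℤ^d`: `‖u - v‖₁ = 1`. -/
abbrev adj {d : ℕ} (u v : Vert d) : Prop := (∑ i, |u i - v i|) = 1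

/-- The Dirichlet energy `‖∇φ‖²_Λ`: the sum of `‖φ_u - φ_v‖²` over unordered
nearest-neighbour edges `{u,v}` meeting `Λ`, each counted once (realized as half
the corresponding sum over ordered pairs). -/
def dirEnergy {d n : ℕ} (Λ : Finset (Vert d)) (φ : Vert d → Pt n) : ℝ :=
  (1 / 2) * ∑ᶠ u : Vert d, ∑ᶠ v : Vert d,
    if adj u v ∧ (u ∈ Λ ∨ v ∈ Λ) then ‖φ u - φ v‖ ^ 2 else 0

/-- The finite-volume Hamiltonian `H^{η,Λ}(φ)`. -/
def hamiltonian {d n : ℕ} (η : Vert d → Pt n → ℝ) (Λ : Finset (Vert d))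
    (φ : Vert d → Pt n) : ℝ :=
  (1 / 2) * dirEnergy Λ φ + ∑ v ∈ Λ, η v (φ v)

/-- The Laplacian `(Δ_Λ φ)_v := ∑_{u ∼ v, {u,v} ∩ Λ ≠ ∅} (φ_u - φ_v)`. -/
def lap {d n : ℕ} (Λ : Finset (Vert d)) (φ : Vert d → Pt n) (v : Vert d) : Pt n :=
  ∑ᶠ u : Vert d, if adj u v ∧ (u ∈ Λ ∨ v ∈ Λ) then φ u - φ v else 0

/-- The pairing `(φ, ψ) := ∑_v φ_v ⬝ ψ_v` (for finitely supported `ψ`). -/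
def pairing {d n : ℕ} (φ ψ : Vert d → Pt n) : ℝ :=
  ∑ᶠ v : Vert d, (inner ℝ (φ v) (ψ v) : ℝ)

/-- The shifted-and-recentered environment `η^s(v,t) := η(v, t - s_v) - η(v, -s_v)`. -/
def shiftEnv {d n : ℕ} (η : Vert d → Pt n → ℝ) (s : Vert d → Pt n) :
    Vert d → Pt n → ℝ :=
  fun v t => η v (t - s v) - η v (-s v)

/-- The box `Λ_L = {-L, …, L}^d`. -/
def box (d : ℕ) (L : ℤ) : Finset (Vert d) :=
  Fintype.piFinset fun _ : Fin d => Finset.Icc (-L) L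

/-- The fractional Brownian covariance `K(t,s) = (‖t‖^{2H} + ‖s‖^{2H} - ‖t-s‖^{2H})/2`. -/
def fbmCov (H : ℝ) {n : ℕ} (t s : Pt n) : ℝ :=
  (‖t‖ ^ (2 * H) + ‖s‖ ^ (2 * H) - ‖t - s‖ ^ (2 * H)) / 2

/-- A fractional Brownian disorder of Hurst parameter `H`. -/
def IsFBMDisorder (d n : ℕ) (H : ℝ) {Ω : Type*} [MeasurableSpace Ω]
    (P : Measure Ω) (η : Ω → Vert d → Pt n → ℝ) : Prop :=
  (∀ v t, Measurable fun ω => η ω v t) ∧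
  (∀ᵐ ω ∂P, ∀ v, Continuous (η ω v) ∧ η ω v 0 = 0) ∧
  iIndepFun (m := fun _ : Vert d => (inferInstance : MeasurableSpace (Pt n → ℝ)))
    (fun v ω => η ω v) P ∧
  ∀ (v : Vert d) (k : ℕ) (t : Fin k → Pt n) (c : Fin k → ℝ),
    P.map (fun ω => ∑ i, c i * η ω v (t i)) =
      gaussianReal 0 (Real.toNNReal (∑ i, ∑ j, c i * c j * fbmCov H (t i) (t j)))

/-- A ground configuration (minimal surface) in a finite set `Λ` with zero
boundary values. -/
def IsGroundConfig {d n : ℕ} {Ω : Type*} [MeasurableSpace Ω] (P : Measure Ω)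
    (η : Ω → Vert d → Pt n → ℝ) (Λ : Finset (Vert d)) (φ : Ω → Vert d → Pt n) : Prop :=
  Measurable φ ∧
  ∀ᵐ ω ∂P, (∀ v ∉ Λ, φ ω v = 0) ∧
    ∀ ψ : Vert d → Pt n, (∀ v ∉ Λ, ψ v = 0) →
      hamiltonian (η ω) Λ (φ ω) ≤ hamiltonian (η ω) Λ ψ

/-- The ground energy `GE^{η,Λ}`. -/
def groundEnergy {d n : ℕ} {Ω : Type*} [MeasurableSpace Ω]
    (η : Ω → Vert d → Pt n → ℝ) (Λ : Finset (Vert d)) (φ : Ω → Vert d → Pt n)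
    (ω : Ω) : ℝ :=
  hamiltonian (η ω) Λ (φ ω)


/-! Summation by parts turns the Hamiltonian of the shifted environment `ζ^t` at `χ + t` into
`H^ζ(χ) + (χ, -Δt) + ½‖∇t‖²` up to a constant. Comparing `φ^±` with the competitors `ψ_ζ ± s`
therefore gives `H^ζ(φ^± ∓ s) ± (φ^±, -Δs) ≤ H^ζ(ψ_ζ) ± (ψ_ζ, -Δs) + ‖∇s‖²`. If `φ^±, φ^η ∈ Π`,
then `φ^± ∓ s ∈ Π ∓ s`, so `H^ζ(φ^± ∓ s) ≥ Δ₂ + H^η(φ^± ∓ s) ≥ Δ₂ + H^η(φ^η) ≥ Δ₂ + H^η(ψ_η)`,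
and adding the two comparisons gives `Δ₁ + Δ₂ + Δ₃ ≤ ‖∇s‖²`. -/

namespace Deloc

variable {d n : ℕ}

lemma adj_comm {u v : Vert d} : adj u v ↔ adj v u := by
  simp only [adj, abs_sub_comm (u _)]

lemma edge_comm {Λ : Finset (Vert d)} {u v : Vert d} :
    (adj u v ∧ (u ∈ Λ ∨ v ∈ Λ)) ↔ (adj v u ∧ (v ∈ Λ ∨ u ∈ Λ)) := by
  rw [adj_comm, or_comm]

def cube (u : Vert d) : Finset (Vert d) :=
  Fintype.piFinset fun i => Finset.Icc (u i - 1) (u i + 1)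

lemma self_mem_cube (u : Vert d) : u ∈ cube u := by
  simp [cube]

lemma mem_cube_of_adj {u v : Vert d} (h : adj u v) : v ∈ cube u := by
  simp only [cube, Fintype.mem_piFinset, Finset.mem_Icc]
  intro i
  have hi : |u i - v i| ≤ 1 :=
    h ▸ Finset.single_le_sum (fun j _ => abs_nonneg (u j - v j)) (Finset.mem_univ i)
  have := abs_le.mp hi
  omega

/-- Every nearest-neighbour edge meeting `Λ` lies inside `thicken Λ`. -/
def thicken (Λ : Finset (Vert d)) : Finset (Vert d) := Λ.biUnion cube

lemma subset_thicken (Λ : Finset (Vert d)) : Λ ⊆ thicken Λ :=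
  fun u hu => Finset.mem_biUnion.2 ⟨u, hu, self_mem_cube u⟩

lemma mem_thicken_of_edge {Λ : Finset (Vert d)} {u v : Vert d}
    (h : adj u v ∧ (u ∈ Λ ∨ v ∈ Λ)) : v ∈ thicken Λ := by
  rcases h with ⟨huv, hu | hv⟩
  · exact Finset.mem_biUnion.2 ⟨u, hu, mem_cube_of_adj huv⟩
  · exact subset_thicken Λ hv

lemma finsum_edge_eq_sum {M : Type*} [AddCommMonoid M] (Λ : Finset (Vert d))
    (F : Vert d → Vert d → M) (u : Vert d) :
    ∑ᶠ v, (if adj u v ∧ (u ∈ Λ ∨ v ∈ Λ) then F u v else 0) =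
      ∑ v ∈ thicken Λ, if adj u v ∧ (u ∈ Λ ∨ v ∈ Λ) then F u v else 0 := by
  refine finsum_eq_sum_of_support_subset _ fun v hv => ?_
  by_contra hvT
  exact hv (if_neg fun h => hvT (mem_thicken_of_edge h))

lemma dirEnergy_eq_sum (Λ : Finset (Vert d)) (φ : Vert d → Pt n) :
    dirEnergy Λ φ = (1 / 2) * ∑ u ∈ thicken Λ, ∑ v ∈ thicken Λ,
      if adj u v ∧ (u ∈ Λ ∨ v ∈ Λ) then ‖φ u - φ v‖ ^ 2 else 0 := by
  simp only [dirEnergy, finsum_edge_eq_sum Λ (fun u v => ‖φ u - φ v‖ ^ 2)]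
  rw [finsum_eq_sum_of_support_subset]
  intro u hu
  by_contra huT
  refine hu (Finset.sum_eq_zero fun v _ => if_neg fun h => huT ?_)
  exact mem_thicken_of_edge (edge_comm.1 h)

lemma lap_eq_sum (Λ : Finset (Vert d)) (φ : Vert d → Pt n) (v : Vert d) :
    lap Λ φ v = ∑ u ∈ thicken Λ, if adj u v ∧ (u ∈ Λ ∨ v ∈ Λ) then φ u - φ v else 0 := by
  refine finsum_eq_sum_of_support_subset _ fun u hu => ?_
  by_contra huT
  exact hu (if_neg fun h => huT (mem_thicken_of_edge (edge_comm.1 h)))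

lemma pairing_eq_sum {t : Finset (Vert d)} {χ : Vert d → Pt n} (hχ : ∀ v ∉ t, χ v = 0)
    (ψ : Vert d → Pt n) : pairing χ ψ = ∑ v ∈ t, inner ℝ (χ v) (ψ v) := by
  refine finsum_eq_sum_of_support_subset _ fun v hv => ?_
  by_contra hvt
  exact hv (by simp only [hχ v hvt, inner_zero_left])

lemma pairing_sub_left {Λ : Finset (Vert d)} {χ χ' : Vert d → Pt n}
    (hχ : ∀ v ∉ Λ, χ v = 0) (hχ' : ∀ v ∉ Λ, χ' v = 0) (ψ : Vert d → Pt n) :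
    pairing (χ - χ') ψ = pairing χ ψ - pairing χ' ψ := by
  have hsub : ∀ v ∉ Λ, (χ - χ') v = 0 := fun v hv => by simp [hχ v hv, hχ' v hv]
  simp only [pairing_eq_sum hsub, pairing_eq_sum hχ, pairing_eq_sum hχ', Pi.sub_apply,
    inner_sub_left, Finset.sum_sub_distrib]

lemma pairing_neg_right (χ ψ : Vert d → Pt n) : pairing χ (-ψ) = -pairing χ ψ := by
  simp only [pairing, Pi.neg_apply, inner_neg_right, finsum_neg_distrib]

lemma lap_neg (Λ : Finset (Vert d)) (φ : Vert d → Pt n) : lap Λ (-φ) = -lap Λ φ := by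
  ext1 v
  rw [Pi.neg_apply, lap, lap, ← finsum_neg_distrib]
  refine finsum_congr fun u => ?_
  split_ifs
  · simp only [Pi.neg_apply, neg_sub_neg, neg_sub]
  · simp

lemma dirEnergy_neg (Λ : Finset (Vert d)) (φ : Vert d → Pt n) :
    dirEnergy Λ (-φ) = dirEnergy Λ φ := by
  simp only [dirEnergy, Pi.neg_apply, neg_sub_neg, norm_sub_rev]

def dirForm (Λ : Finset (Vert d)) (φ ψ : Vert d → Pt n) : ℝ :=
  (1 / 2) * ∑ u ∈ thicken Λ, ∑ v ∈ thicken Λ,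
    if adj u v ∧ (u ∈ Λ ∨ v ∈ Λ) then inner ℝ (φ u - φ v) (ψ u - ψ v) else 0

lemma dirEnergy_eq_dirForm (Λ : Finset (Vert d)) (φ : Vert d → Pt n) :
    dirEnergy Λ φ = dirForm Λ φ φ := by
  simp only [dirEnergy_eq_sum, dirForm, real_inner_self_eq_norm_sq]

lemma dirEnergy_add (Λ : Finset (Vert d)) (φ ψ : Vert d → Pt n) :
    dirEnergy Λ (φ + ψ) = dirEnergy Λ φ + 2 * dirForm Λ φ ψ + dirEnergy Λ ψ := by
  simp only [dirEnergy_eq_dirForm, dirForm, Finset.mul_sum, ← Finset.sum_add_distrib]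
  refine Finset.sum_congr rfl fun u _ => Finset.sum_congr rfl fun v _ => ?_
  split_ifs
  · simp only [Pi.add_apply, add_sub_add_comm, inner_add_left, inner_add_right,
      real_inner_comm (φ u - φ v)]
    ring
  · ring

/-- Summation by parts (discrete Green identity). -/
lemma dirForm_eq_pairing_neg_lap {Λ : Finset (Vert d)} {χ : Vert d → Pt n}
    (hχ : ∀ v ∉ Λ, χ v = 0) (φ : Vert d → Pt n) :
    dirForm Λ χ φ = pairing χ (-lap Λ φ) := by
  set f : Vert d → Vert d → ℝ := fun u v =>
    if adj u v ∧ (u ∈ Λ ∨ v ∈ Λ) then inner ℝ (χ u) (φ u - φ v) else 0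
  have hsplit : ∀ u v, (if adj u v ∧ (u ∈ Λ ∨ v ∈ Λ) then
      inner ℝ (χ u - χ v) (φ u - φ v) else 0) = f u v + f v u := by
    intro u v
    simp only [f, ← edge_comm (u := u)]
    split_ifs
    · rw [inner_sub_left, ← neg_sub (φ u), inner_neg_right, sub_eq_add_neg]
    · simp
  have hrow : ∀ u, ∑ v ∈ thicken Λ, f u v = inner ℝ (χ u) ((-lap Λ φ) u) := by
    intro u
    rw [Pi.neg_apply, lap_eq_sum, ← Finset.sum_neg_distrib, inner_sum]
    refine Finset.sum_congr rfl fun v _ => ?_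
    simp only [f, edge_comm (u := u)]
    split_ifs <;> simp
  simp only [dirForm, hsplit, Finset.sum_add_distrib]
  rw [Finset.sum_comm (f := fun u v => f v u), ← two_mul, ← mul_assoc,
    one_div_mul_cancel two_ne_zero, one_mul, pairing_eq_sum fun v hv => hχ v fun h => hv (subset_thicken Λ h)]
  exact Finset.sum_congr rfl fun u _ => hrow u

lemma pairing_neg_lap_self {Λ : Finset (Vert d)} {φ : Vert d → Pt n}
    (hφ : ∀ v ∉ Λ, φ v = 0) : pairing φ (-lap Λ φ) = dirEnergy Λ φ := by
  rw [dirEnergy_eq_dirForm, dirForm_eq_pairing_neg_lap hφ]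

lemma hamiltonian_shiftEnv_add (ζ : Vert d → Pt n → ℝ) (Λ : Finset (Vert d))
    {χ : Vert d → Pt n} (hχ : ∀ v ∉ Λ, χ v = 0) (t : Vert d → Pt n) :
    hamiltonian (shiftEnv ζ t) Λ (χ + t) = hamiltonian ζ Λ χ + pairing χ (-lap Λ t) +
      (1 / 2) * dirEnergy Λ t - ∑ v ∈ Λ, ζ v (-t v) := by
  rw [hamiltonian, hamiltonian, dirEnergy_add, dirForm_eq_pairing_neg_lap hχ]
  simp only [shiftEnv, Pi.add_apply, add_sub_cancel_right, Finset.sum_sub_distrib]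
  ring

/-- Comparing a ground state `φ` of `ζ^t` with the competitor `ψ + t`. -/
lemma hamiltonian_sub_add_pairing_le {ζ : Vert d → Pt n → ℝ} {Λ : Finset (Vert d)}
    {t φ ψ : Vert d → Pt n} (ht : ∀ v ∉ Λ, t v = 0) (hφ : ∀ v ∉ Λ, φ v = 0)
    (hmin : ∀ χ : Vert d → Pt n, (∀ v ∉ Λ, χ v = 0) →
      hamiltonian (shiftEnv ζ t) Λ φ ≤ hamiltonian (shiftEnv ζ t) Λ χ)
    (hψ : ∀ v ∉ Λ, ψ v = 0) :
    hamiltonian ζ Λ (φ - t) + pairing φ (-lap Λ t) ≤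
      hamiltonian ζ Λ ψ + pairing ψ (-lap Λ t) + dirEnergy Λ t := by
  have hφt : ∀ v ∉ Λ, (φ - t) v = 0 := fun v hv => by simp [hφ v hv, ht v hv]
  have hle := hmin (ψ + t) fun v hv => by simp [hψ v hv, ht v hv]
  have hφ_eq := hamiltonian_shiftEnv_add ζ Λ hφt t
  rw [sub_add_cancel, pairing_sub_left hφ ht, pairing_neg_lap_self ht] at hφ_eq
  rw [hφ_eq, hamiltonian_shiftEnv_add ζ Λ hψ t] at hle
  linarith

end Deloc

open Deloc in
theorem deterministic_delocalization_general {d n : ℕ}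
    (Λ : Finset (Vert d)) (Pi : Set (Vert d → Pt n))
    (hPi : ∀ χ ∈ Pi, ∀ v ∉ Λ, χ v = 0)
    (s : Vert d → Pt n) (hs : ∀ v ∉ Λ, s v = 0)
    (η ζ : Vert d → Pt n → ℝ)
    (φη φp φm ψη ψζ : Vert d → Pt n)
    (hφη : (∀ v ∉ Λ, φη v = 0) ∧ ∀ χ : Vert d → Pt n, (∀ v ∉ Λ, χ v = 0) →
      hamiltonian η Λ φη ≤ hamiltonian η Λ χ)
    (hφp : (∀ v ∉ Λ, φp v = 0) ∧ ∀ χ : Vert d → Pt n, (∀ v ∉ Λ, χ v = 0) →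
      hamiltonian (shiftEnv ζ s) Λ φp ≤ hamiltonian (shiftEnv ζ s) Λ χ)
    (hφm : (∀ v ∉ Λ, φm v = 0) ∧ ∀ χ : Vert d → Pt n, (∀ v ∉ Λ, χ v = 0) →
      hamiltonian (shiftEnv ζ (fun v => -s v)) Λ φm ≤
        hamiltonian (shiftEnv ζ (fun v => -s v)) Λ χ)
    (hψη : ψη ∈ Pi ∧ ∀ χ ∈ Pi, hamiltonian η Λ ψη ≤ hamiltonian η Λ χ)
    (hψζ : ψζ ∈ Pi ∧ ∀ χ ∈ Pi, hamiltonian ζ Λ ψζ ≤ hamiltonian ζ Λ χ)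
    (Δ₂ : ℝ)
    (hΔ₂ : ∀ χ : Vert d → Pt n,
      ((∃ χ' ∈ Pi, χ = fun v => χ' v + s v) ∨ (∃ χ' ∈ Pi, χ = fun v => χ' v - s v)) →
        Δ₂ ≤ hamiltonian ζ Λ χ - hamiltonian η Λ χ)
    (hgap : dirEnergy Λ s <
      (hamiltonian η Λ ψη - hamiltonian ζ Λ ψζ) + Δ₂ +
        (1 / 2) * pairing (fun v => φp v - φm v) (fun v => -lap Λ s v)) :
    φp ∉ Pi ∨ φm ∉ Pi ∨ φη ∉ Pi := by
  by_contra! ⟨hp, hm, he⟩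
  have hψζ0 := hPi ψζ hψζ.1
  have hs_neg : ∀ v ∉ Λ, (-s) v = 0 := fun v hv => by simp [hs v hv]
  have bound_p := hamiltonian_sub_add_pairing_le hs hφp.1 hφp.2 hψζ0
  have bound_m := hamiltonian_sub_add_pairing_le hs_neg hφm.1 hφm.2 hψζ0
  rw [sub_neg_eq_add, lap_neg, neg_neg, dirEnergy_neg] at bound_m
  have gap_p := hΔ₂ (φp - s) (Or.inr ⟨φp, hp, rfl⟩)
  have gap_m := hΔ₂ (φm + s) (Or.inl ⟨φm, hm, rfl⟩)
  have ground_p := hφη.2 (φp - s) fun v hv => by simp [hφp.1 v hv, hs v hv]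
  have ground_m := hφη.2 (φm + s) fun v hv => by simp [hφm.1 v hv, hs v hv]
  have ground_Pi := hψη.2 φη he
  have hpair : pairing (fun v => φp v - φm v) (fun v => -lap Λ s v) =
      pairing φp (-lap Λ s) - pairing φm (-lap Λ s) := pairing_sub_left hφp.1 hφm.1 _
  linarith [pairing_neg_right φm (lap Λ s), pairing_neg_right ψζ (lap Λ s)]

/-- **Deterministic delocalization criterion** (Proposition 4.2). -/
theorem deterministic_delocalization {d n : ℕ} (hd : 1 ≤ d) (hn : 1 ≤ n)
    (Λ : Finset (Vert d)) (Pi : Set (Vert d → Pt n))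
    (hPi : ∀ χ ∈ Pi, ∀ v ∉ Λ, χ v = 0)
    (s : Vert d → Pt n) (hs : ∀ v ∉ Λ, s v = 0)
    (η ζ : Vert d → Pt n → ℝ)
    (φη φp φm ψη ψζ ρp ρm : Vert d → Pt n)
    (hφη : (∀ v ∉ Λ, φη v = 0) ∧ ∀ χ : Vert d → Pt n, (∀ v ∉ Λ, χ v = 0) →
      hamiltonian η Λ φη ≤ hamiltonian η Λ χ)
    (hφp : (∀ v ∉ Λ, φp v = 0) ∧ ∀ χ : Vert d → Pt n, (∀ v ∉ Λ, χ v = 0) →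
      hamiltonian (shiftEnv ζ s) Λ φp ≤ hamiltonian (shiftEnv ζ s) Λ χ)
    (hφm : (∀ v ∉ Λ, φm v = 0) ∧ ∀ χ : Vert d → Pt n, (∀ v ∉ Λ, χ v = 0) →
      hamiltonian (shiftEnv ζ (fun v => -s v)) Λ φm ≤
        hamiltonian (shiftEnv ζ (fun v => -s v)) Λ χ)
    (hψη : ψη ∈ Pi ∧ ∀ χ ∈ Pi, hamiltonian η Λ ψη ≤ hamiltonian η Λ χ)
    (hψζ : ψζ ∈ Pi ∧ ∀ χ ∈ Pi, hamiltonian ζ Λ ψζ ≤ hamiltonian ζ Λ χ)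
    (hρp : ρp ∈ Pi ∧ ∀ χ ∈ Pi,
      hamiltonian (shiftEnv ζ s) Λ ρp ≤ hamiltonian (shiftEnv ζ s) Λ χ)
    (hρm : ρm ∈ Pi ∧ ∀ χ ∈ Pi,
      hamiltonian (shiftEnv ζ (fun v => -s v)) Λ ρm ≤
        hamiltonian (shiftEnv ζ (fun v => -s v)) Λ χ)
    (Δ₂ : ℝ)
    (hΔ₂ : ∀ χ : Vert d → Pt n,
      ((∃ χ' ∈ Pi, χ = fun v => χ' v + s v) ∨ (∃ χ' ∈ Pi, χ = fun v => χ' v - s v)) →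
        Δ₂ ≤ hamiltonian ζ Λ χ - hamiltonian η Λ χ)
    (hgap : dirEnergy Λ s <
      (hamiltonian η Λ ψη - hamiltonian ζ Λ ψζ) + Δ₂ +
        (1 / 2) * pairing (fun v => φp v - φm v) (fun v => -lap Λ s v)) :
    φp ∉ Pi ∨ φm ∉ Pi ∨ φη ∉ Pi :=
  deterministic_delocalization_general Λ Pi hPi s hs η ζ φη φp φm ψη ψζ hφη hφp hφm hψη hψζ Δ₂ hΔ₂
    hgap
end
end

section
/- Comparison of the minimizer with its shifted version (deterministic part of Proposition 4.4). Let d, n ≥ 1 be integers, Λ ⊂ ℤ^d finite, η : ℤ^d × ℝ^n → ℝ an environment, and s ∈ Ω^Λ (i.e. s : ℤ^d → ℝ^n with s_v = 0 for v ∉ Λ). Suppose φ ∈ Ω^Λ minimizes H^{η,Λ} over Ω^Λ and ψ ∈ Ω^Λ minimizes H^{η^{−s},Λ} over Ω^Λ. Then 0 ≤ H^{η,Λ}(ψ + s) − H^{η,Λ}(φ) ≤ (ψ + s − φ, −Δ_Λ s). -/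
open MeasureTheory ProbabilityTheory

noncomputable section

/-! Writing a competitor as `χ + s`, the quadratic energy splits as
`H^η(χ + s) = H^{η^{-s}}(χ) + (χ, -Δ_Λ s) + C(s)` with `C(s)` independent of `χ`
(discrete Green identity). Comparing `ψ` with the admissible competitor `φ - s` for
`H^{η^{-s}}` then gives the upper bound, and the lower bound is the minimality of `φ` tested
against `ψ + s`. -/

open scoped RealInnerProductSpace

section GreenIdentity

variable {V E : Type*} [NormedAddCommGroup E] [InnerProductSpace ℝ E]
  (S : Finset V) (r : V → V → Prop) [DecidableRel r]

theorem Finset.sum_sum_ite_inner_sub_sub (hr : Std.Symm r) (χ s : V → E) :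
    ∑ u ∈ S, ∑ v ∈ S, (if r u v then ⟪χ u - χ v, s u - s v⟫ else 0) =
      2 * ∑ u ∈ S, ⟪χ u, ∑ v ∈ S, if r u v then s u - s v else 0⟫ := by
  have hswap : ∑ u ∈ S, ∑ v ∈ S, (if r u v then ⟪χ v, s u - s v⟫ else 0) =
      -∑ u ∈ S, ∑ v ∈ S, (if r u v then ⟪χ u, s u - s v⟫ else 0) := by
    rw [Finset.sum_comm, ← Finset.sum_neg_distrib]
    refine Finset.sum_congr rfl fun u _ => ?_
    rw [← Finset.sum_neg_distrib]
    refine Finset.sum_congr rfl fun v _ => ?_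
    rw [if_congr ⟨hr.symm v u, hr.symm u v⟩ rfl rfl, apply_ite Neg.neg, neg_zero,
      ← inner_neg_right, neg_sub]
  have hsplit : ∀ u v, (if r u v then ⟪χ u - χ v, s u - s v⟫ else 0) =
      (if r u v then ⟪χ u, s u - s v⟫ else 0) -
        (if r u v then ⟪χ v, s u - s v⟫ else 0) := by
    intro u v
    split_ifs
    · exact inner_sub_left _ _ _
    · exact (sub_zero 0).symm
  simp only [hsplit, Finset.sum_sub_distrib, hswap, inner_sum, apply_ite (inner ℝ _),
    inner_zero_right]
  ring

theorem Finset.sum_sum_ite_norm_add_sub_sq (χ s : V → E) :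
    ∑ u ∈ S, ∑ v ∈ S, (if r u v then ‖(χ u + s u) - (χ v + s v)‖ ^ 2 else 0) =
      ∑ u ∈ S, ∑ v ∈ S, (if r u v then ‖χ u - χ v‖ ^ 2 else 0) +
        2 * ∑ u ∈ S, ∑ v ∈ S, (if r u v then ⟪χ u - χ v, s u - s v⟫ else 0) +
        ∑ u ∈ S, ∑ v ∈ S, (if r u v then ‖s u - s v‖ ^ 2 else 0) := by
  have hpt : ∀ u v, (if r u v then ‖(χ u + s u) - (χ v + s v)‖ ^ 2 else 0) =
      (if r u v then ‖χ u - χ v‖ ^ 2 else 0) +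
        2 * (if r u v then ⟪χ u - χ v, s u - s v⟫ else 0) +
        (if r u v then ‖s u - s v‖ ^ 2 else 0) := by
    intro u v
    split_ifs
    · rw [add_sub_add_comm, norm_add_sq_real]
    · ring
  simp only [hpt, Finset.sum_add_distrib, ← Finset.mul_sum]

end GreenIdentity

theorem finsum_finsum_eq_sum_sum {α M : Type*} [AddCommMonoid M] (S : Finset α)
    (f : α → α → M) (hf : ∀ u v, f u v ≠ 0 → u ∈ S ∧ v ∈ S) :
    ∑ᶠ u, ∑ᶠ v, f u v = ∑ u ∈ S, ∑ v ∈ S, f u v := by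
  have hrow : ∀ u, ∑ᶠ v, f u v = ∑ v ∈ S, f u v := fun u =>
    finsum_eq_sum_of_support_subset _ fun v hv => (hf u v hv).2
  simp only [hrow]
  refine finsum_eq_sum_of_support_subset _ fun u hu => ?_
  obtain ⟨v, -, hv⟩ := Finset.exists_ne_zero_of_sum_ne_zero hu
  exact (hf u v hv).1

section Lattice

variable {d n : ℕ}

theorem adj_comm (u v : Vert d) : adj u v ↔ adj v u := by
  simp only [adj, abs_sub_comm (u _)]

theorem symm_adj_and_mem_or_mem (Λ : Finset (Vert d)) :
    Std.Symm fun u v => adj u v ∧ (u ∈ Λ ∨ v ∈ Λ) :=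
  ⟨fun u v ⟨h, hΛ⟩ => ⟨(adj_comm u v).1 h, hΛ.symm⟩⟩

/-- The `ℓ^∞`-neighbourhood of radius one of `Λ`: a finite set containing both ends of every
edge that meets `Λ`. -/
def closedNbhd (Λ : Finset (Vert d)) : Finset (Vert d) :=
  Λ.biUnion fun w => Fintype.piFinset fun i => Finset.Icc (w i - 1) (w i + 1)

theorem mem_closedNbhd_of_adj_or_eq {Λ : Finset (Vert d)} {u w : Vert d} (hw : w ∈ Λ)
    (h : adj u w ∨ u = w) : u ∈ closedNbhd Λ := by
  refine Finset.mem_biUnion.2 ⟨w, hw, Fintype.mem_piFinset.2 fun i => ?_⟩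
  rcases h with h | rfl
  · have hi : |u i - w i| ≤ 1 :=
      h ▸ Finset.single_le_sum (fun j _ => abs_nonneg (u j - w j)) (Finset.mem_univ i)
    rw [abs_le] at hi
    exact Finset.mem_Icc.2 ⟨by omega, by omega⟩
  · exact Finset.mem_Icc.2 ⟨by omega, by omega⟩

theorem mem_closedNbhd_of_edge {Λ : Finset (Vert d)} {u v : Vert d} (h : adj u v)
    (hΛ : u ∈ Λ ∨ v ∈ Λ) : u ∈ closedNbhd Λ ∧ v ∈ closedNbhd Λ := by
  rcases hΛ with hu | hv
  · exact ⟨mem_closedNbhd_of_adj_or_eq hu (Or.inr rfl),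
      mem_closedNbhd_of_adj_or_eq hu (Or.inl ((adj_comm u v).1 h))⟩
  · exact ⟨mem_closedNbhd_of_adj_or_eq hv (Or.inl h),
      mem_closedNbhd_of_adj_or_eq hv (Or.inr rfl)⟩

theorem dirEnergy_eq_sum (Λ : Finset (Vert d)) (φ : Vert d → Pt n) :
    dirEnergy Λ φ = (1 / 2) * ∑ u ∈ closedNbhd Λ, ∑ v ∈ closedNbhd Λ,
      (if adj u v ∧ (u ∈ Λ ∨ v ∈ Λ) then ‖φ u - φ v‖ ^ 2 else 0) := by
  rw [dirEnergy, finsum_finsum_eq_sum_sum (closedNbhd Λ)]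
  intro u v huv
  by_cases h : adj u v ∧ (u ∈ Λ ∨ v ∈ Λ)
  · exact mem_closedNbhd_of_edge h.1 h.2
  · simp [h] at huv

theorem lap_eq_sum (Λ : Finset (Vert d)) (s : Vert d → Pt n) (w : Vert d) :
    lap Λ s w = ∑ u ∈ closedNbhd Λ,
      (if adj u w ∧ (u ∈ Λ ∨ w ∈ Λ) then s u - s w else 0) := by
  refine finsum_eq_sum_of_support_subset _ fun u hu => ?_
  by_cases h : adj u w ∧ (u ∈ Λ ∨ w ∈ Λ)
  · exact (mem_closedNbhd_of_edge h.1 h.2).1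
  · simp [h] at hu

theorem support_neg_lap_subset (Λ : Finset (Vert d)) (s : Vert d → Pt n) :
    Function.support (fun v => -lap Λ s v) ⊆ closedNbhd Λ := by
  intro w hw
  rw [Function.mem_support, neg_ne_zero, lap_eq_sum] at hw
  obtain ⟨u, -, hu⟩ := Finset.exists_ne_zero_of_sum_ne_zero hw
  by_cases h : adj u w ∧ (u ∈ Λ ∨ w ∈ Λ)
  · exact (mem_closedNbhd_of_edge h.1 h.2).2
  · simp [h] at hu

theorem neg_lap_eq_sum (Λ : Finset (Vert d)) (s : Vert d → Pt n) (u : Vert d) :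
    -lap Λ s u = ∑ v ∈ closedNbhd Λ,
      (if adj u v ∧ (u ∈ Λ ∨ v ∈ Λ) then s u - s v else 0) := by
  rw [lap_eq_sum, ← Finset.sum_neg_distrib]
  refine Finset.sum_congr rfl fun v _ => ?_
  rw [if_congr ⟨(symm_adj_and_mem_or_mem Λ).symm v u, (symm_adj_and_mem_or_mem Λ).symm u v⟩
    rfl rfl, apply_ite Neg.neg, neg_sub, neg_zero]

theorem pairing_eq_sum_of_support_subset {S : Finset (Vert d)} (χ : Vert d → Pt n)
    {ψ : Vert d → Pt n} (hψ : Function.support ψ ⊆ S) :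
    pairing χ ψ = ∑ v ∈ S, ⟪χ v, ψ v⟫ :=
  finsum_eq_sum_of_support_subset _ fun v hv =>
    hψ fun h => hv (by simp only [h, inner_zero_right])

theorem pairing_sub_left (χ χ' : Vert d → Pt n) {ψ : Vert d → Pt n}
    (hψ : (Function.support ψ).Finite) :
    pairing (fun v => χ v - χ' v) ψ = pairing χ ψ - pairing χ' ψ := by
  have hfin : ∀ ξ : Vert d → Pt n, (Function.support fun v => ⟪ξ v, ψ v⟫).Finite :=
    fun ξ => hψ.subset fun v hv h => hv (by simp only [h, inner_zero_right])
  simp only [pairing, inner_sub_left]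
  exact finsum_sub_distrib (hfin χ) (hfin χ')

theorem dirEnergy_add (Λ : Finset (Vert d)) (χ s : Vert d → Pt n) :
    dirEnergy Λ (fun v => χ v + s v) =
      dirEnergy Λ χ + 2 * pairing χ (fun v => -lap Λ s v) + dirEnergy Λ s := by
  rw [dirEnergy_eq_sum, dirEnergy_eq_sum, dirEnergy_eq_sum,
    Finset.sum_sum_ite_norm_add_sub_sq,
    Finset.sum_sum_ite_inner_sub_sub _ _ (symm_adj_and_mem_or_mem Λ),
    pairing_eq_sum_of_support_subset χ (support_neg_lap_subset Λ s)]
  simp only [neg_lap_eq_sum]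
  ring

theorem hamiltonian_add (η : Vert d → Pt n → ℝ) (Λ : Finset (Vert d))
    (χ s : Vert d → Pt n) :
    hamiltonian η Λ (fun v => χ v + s v) =
      hamiltonian (shiftEnv η fun v => -s v) Λ χ + pairing χ (fun v => -lap Λ s v) +
        (1 / 2) * dirEnergy Λ s + ∑ v ∈ Λ, η v (s v) := by
  simp only [hamiltonian, shiftEnv, sub_neg_eq_add, neg_neg, dirEnergy_add,
    Finset.sum_sub_distrib]
  ring

end Lattice

theorem minimizer_shift_comparison_general {d n : ℕ}
    (Λ : Finset (Vert d)) (η : Vert d → Pt n → ℝ)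
    (s : Vert d → Pt n) (hs : ∀ v ∉ Λ, s v = 0)
    (φ ψ : Vert d → Pt n)
    (hφ : (∀ v ∉ Λ, φ v = 0) ∧ ∀ χ : Vert d → Pt n, (∀ v ∉ Λ, χ v = 0) →
      hamiltonian η Λ φ ≤ hamiltonian η Λ χ)
    (hψ : (∀ v ∉ Λ, ψ v = 0) ∧ ∀ χ : Vert d → Pt n, (∀ v ∉ Λ, χ v = 0) →
      hamiltonian (shiftEnv η (fun v => -s v)) Λ ψ ≤
        hamiltonian (shiftEnv η (fun v => -s v)) Λ χ) :
    0 ≤ hamiltonian η Λ (fun v => ψ v + s v) - hamiltonian η Λ φ ∧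
    hamiltonian η Λ (fun v => ψ v + s v) - hamiltonian η Λ φ ≤
      pairing (fun v => ψ v + s v - φ v) (fun v => -lap Λ s v) := by
  obtain ⟨hφΛ, hφmin⟩ := hφ
  obtain ⟨hψΛ, hψmin⟩ := hψ
  refine ⟨sub_nonneg.2 (hφmin _ fun v hv => by simp [hψΛ v hv, hs v hv]), ?_⟩
  have hcomp := hψmin (fun v => φ v - s v) fun v hv => by simp [hφΛ v hv, hs v hv]
  have hφ_eq := hamiltonian_add η Λ (fun v => φ v - s v) s
  simp only [sub_add_cancel] at hφ_eq
  have hpair := pairing_sub_left ψ (fun v => φ v - s v)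
    ((closedNbhd Λ).finite_toSet.subset (support_neg_lap_subset Λ s))
  simp only [sub_sub_eq_add_sub] at hpair
  rw [hamiltonian_add]
  linarith

/-- **Comparison of the minimizer with its shifted version** (deterministic part of
Proposition 4.4). -/
theorem minimizer_shift_comparison {d n : ℕ} (hd : 1 ≤ d) (hn : 1 ≤ n)
    (Λ : Finset (Vert d)) (η : Vert d → Pt n → ℝ)
    (s : Vert d → Pt n) (hs : ∀ v ∉ Λ, s v = 0)
    (φ ψ : Vert d → Pt n)
    (hφ : (∀ v ∉ Λ, φ v = 0) ∧ ∀ χ : Vert d → Pt n, (∀ v ∉ Λ, χ v = 0) →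
      hamiltonian η Λ φ ≤ hamiltonian η Λ χ)
    (hψ : (∀ v ∉ Λ, ψ v = 0) ∧ ∀ χ : Vert d → Pt n, (∀ v ∉ Λ, χ v = 0) →
      hamiltonian (shiftEnv η (fun v => -s v)) Λ ψ ≤
        hamiltonian (shiftEnv η (fun v => -s v)) Λ χ) :
    0 ≤ hamiltonian η Λ (fun v => ψ v + s v) - hamiltonian η Λ φ ∧
    hamiltonian η Λ (fun v => ψ v + s v) - hamiltonian η Λ φ ≤
      pairing (fun v => ψ v + s v - φ v) (fun v => -lap Λ s v) :=
  minimizer_shift_comparison_general Λ η s hs φ ψ hφ hψ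

end
end

section
/- Fractional Brownian covariance estimate (Claim A.1). Let n ≥ 1 be an integer, H ∈ (0,1), and let e₁ ∈ ℝ^n be the first standard basis vector. For every t ∈ ℝ^n: 2‖t‖^{2H} + 2 − ‖t − e₁‖^{2H} − ‖t + e₁‖^{2H} ≤ min( 2(‖t‖^{2H} + ‖t‖), 8 ), and 2‖t‖^{2H} + 2 − ‖t − e₁‖^{2H} − ‖t + e₁‖^{2H} ≥ 2( ‖t‖^{2H} + 1 − (‖t‖² + 1)^H ) ≥ 0, where ‖·‖ is the Euclidean norm on ℝ^n and powers are real powers. -/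
open MeasureTheory ProbabilityTheory

noncomputable section

/-! With `a = ‖t‖`, the squares `‖t ± e₁‖² = a² + 1 ± 2⟪t, e₁⟫` are two points of
`[(a - 1)², (a + 1)²]` symmetric about `a² + 1`. As `y ↦ y ^ H` is concave, the sum of their
`H`-th powers lies between its value at the endpoints, `(a + 1)^{2H} + |a - 1|^{2H}`, and its value
at the midpoint, `2 (a² + 1)^H`. The lower bound then follows from subadditivity of `y ↦ y ^ H`,
and the upper bounds from one-variable estimates of `(a + 1)^{2H} + |a - 1|^{2H}`: subadditivity of
`x ↦ x ^ {2H}` when `2H ≤ 1`, its convexity when `2H ≥ 1`. -/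

open Real Set

lemma Real.rpow_two_mul {x : ℝ} (hx : 0 ≤ x) (p : ℝ) : x ^ (2 * p) = (x ^ 2) ^ p := by
  exact_mod_cast Real.rpow_natCast_mul hx 2 p

theorem ConcaveOn.add_le_apply_add_apply_sub {f : ℝ → ℝ} {p q u : ℝ}
    (hf : ConcaveOn ℝ (Icc p q) f) (hu : u ∈ Icc p q) :
    f p + f q ≤ f u + f (p + q - u) := by
  have hreflect : ∀ x ∈ Icc p q, p + q - x ∈ Icc p q := fun x hx =>
    ⟨by linarith [hx.2], by linarith [hx.1]⟩
  have hsym : ConcaveOn ℝ (Icc p q) fun x => f x + f (p + q - x) := by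
    refine ⟨convex_Icc p q, fun x hx y hy a b ha hb hab => ?_⟩
    have hcomb : p + q - (a • x + b • y) = a • (p + q - x) + b • (p + q - y) := by
      simp only [smul_eq_mul]; linear_combination (p + q) * hab.symm
    have h₁ := hf.2 hx hy ha hb hab
    have h₂ := hf.2 (hreflect x hx) (hreflect y hy) ha hb hab
    simp only [smul_eq_mul] at *
    rw [hcomb]
    linarith
  have hpq : p ≤ q := hu.1.trans hu.2
  have hmin := hsym.min_le_of_mem_Icc (left_mem_Icc.2 hpq) (right_mem_Icc.2 hpq) hu
  simpa [add_comm (f q)] using hmin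

section InnerProductSpace

variable {E : Type*} [NormedAddCommGroup E] [InnerProductSpace ℝ E] {H : ℝ}

theorem norm_add_rpow_add_norm_sub_rpow_le (hH₀ : 0 ≤ H) (hH₁ : H ≤ 1) (t e : E) :
    ‖t + e‖ ^ (2 * H) + ‖t - e‖ ^ (2 * H) ≤ 2 * (‖t‖ ^ 2 + ‖e‖ ^ 2) ^ H := by
  have hmid := (concaveOn_rpow hH₀ hH₁).2 (mem_Ici.2 (sq_nonneg ‖t + e‖))
    (mem_Ici.2 (sq_nonneg ‖t - e‖)) (by norm_num : (0 : ℝ) ≤ 1 / 2)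
    (by norm_num : (0 : ℝ) ≤ 1 / 2) (by norm_num)
  have hparallelogram : (1 / 2 : ℝ) * ‖t + e‖ ^ 2 + 1 / 2 * ‖t - e‖ ^ 2 = ‖t‖ ^ 2 + ‖e‖ ^ 2 := by
    rw [norm_add_sq_real, norm_sub_sq_real]; ring
  simp only [smul_eq_mul, hparallelogram] at hmid
  rw [rpow_two_mul (norm_nonneg _), rpow_two_mul (norm_nonneg _)]
  linarith

theorem add_rpow_add_abs_sub_rpow_le_norm_add_rpow_add_norm_sub_rpow (hH₀ : 0 ≤ H)
    (hH₁ : H ≤ 1) (t e : E) :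
    (‖t‖ + ‖e‖) ^ (2 * H) + |‖t‖ - ‖e‖| ^ (2 * H) ≤
      ‖t + e‖ ^ (2 * H) + ‖t - e‖ ^ (2 * H) := by
  have hinner := abs_le.1 (abs_real_inner_le_norm t e)
  have hadd := norm_add_sq_real t e
  have hsub := norm_sub_sq_real t e
  have hu : ‖t + e‖ ^ 2 ∈ Icc ((‖t‖ - ‖e‖) ^ 2) ((‖t‖ + ‖e‖) ^ 2) :=
    ⟨by nlinarith, by nlinarith⟩
  have hconc : ConcaveOn ℝ (Icc ((‖t‖ - ‖e‖) ^ 2) ((‖t‖ + ‖e‖) ^ 2)) (· ^ H) :=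
    (concaveOn_rpow hH₀ hH₁).subset (fun x hx => mem_Ici.2 ((sq_nonneg _).trans hx.1))
      (convex_Icc _ _)
  have key := hconc.add_le_apply_add_apply_sub hu
  have hv : (‖t‖ - ‖e‖) ^ 2 + (‖t‖ + ‖e‖) ^ 2 - ‖t + e‖ ^ 2 = ‖t - e‖ ^ 2 := by
    rw [hadd, hsub]; ring
  rw [hv] at key
  rw [rpow_two_mul (by positivity), rpow_two_mul (abs_nonneg _), sq_abs,
    rpow_two_mul (norm_nonneg _), rpow_two_mul (norm_nonneg _)]
  linarith

end InnerProductSpace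

theorem two_sub_two_mul_le_add_one_rpow_add_abs_sub_one_rpow {a p : ℝ} (ha : 0 ≤ a)
    (hp₀ : 0 ≤ p) (hp₂ : p ≤ 2) : 2 - 2 * a ≤ (a + 1) ^ p + |a - 1| ^ p := by
  have hone : 1 ≤ (a + 1) ^ p := one_le_rpow (by linarith) hp₀
  rcases le_total (1 / 2) a with ha' | ha'
  · linarith [rpow_nonneg (abs_nonneg (a - 1)) p]
  · have hbase : |a - 1| = 1 - a := by rw [abs_sub_comm]; exact abs_of_nonneg (by linarith)
    have hpow : (1 - a) ^ (2 : ℝ) ≤ (1 - a) ^ p :=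
      rpow_le_rpow_of_exponent_ge (by linarith) (by linarith) hp₂
    rw [rpow_two] at hpow
    rw [hbase]
    nlinarith

theorem two_mul_rpow_le_add_one_rpow_add_abs_sub_one_rpow {a p : ℝ} (ha : 0 ≤ a)
    (hp : 0 ≤ p) : 2 * a ^ p ≤ (a + 1) ^ p + |a - 1| ^ p + 1 := by
  have hmono : a ^ p ≤ (a + 1) ^ p := rpow_le_rpow ha (by linarith) hp
  rcases le_total p 1 with hp₁ | hp₁
  · have hsubadd : a ^ p ≤ |a - 1| ^ p + 1 := by
      calc a ^ p ≤ (|a - 1| + 1) ^ p := rpow_le_rpow ha (by linarith [le_abs_self (a - 1)]) hp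
        _ ≤ |a - 1| ^ p + 1 ^ p := rpow_add_le_add_rpow (abs_nonneg _) zero_le_one hp hp₁
        _ = |a - 1| ^ p + 1 := by rw [one_rpow]
    linarith
  · rcases le_total a 1 with ha₁ | ha₁
    · linarith [rpow_le_one ha ha₁ hp, rpow_nonneg (abs_nonneg (a - 1)) p]
    · have hmid := (convexOn_rpow hp₁).2 (mem_Ici.2 (by linarith : (0 : ℝ) ≤ a + 1))
        (mem_Ici.2 (by linarith : (0 : ℝ) ≤ a - 1)) (by norm_num : (0 : ℝ) ≤ 1 / 2)
        (by norm_num : (0 : ℝ) ≤ 1 / 2) (by norm_num)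
      have hcenter : (1 / 2 : ℝ) • (a + 1) + (1 / 2 : ℝ) • (a - 1) = a := by
        simp only [smul_eq_mul]; ring
      rw [hcenter] at hmid
      simp only [smul_eq_mul] at hmid
      rw [abs_of_nonneg (by linarith : (0 : ℝ) ≤ a - 1)]
      linarith

/-- **Fractional Brownian covariance estimate** (Claim A.1). -/
theorem fbm_covariance_estimate {n : ℕ} (hn : 0 < n) (H : ℝ)
    (hH : H ∈ Set.Ioo (0 : ℝ) 1)
    (e₁ : Pt n) (he₁ : e₁ = EuclideanSpace.single (⟨0, hn⟩ : Fin n) 1)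
    (t : Pt n) :
    2 * ‖t‖ ^ (2 * H) + 2 - ‖t - e₁‖ ^ (2 * H) - ‖t + e₁‖ ^ (2 * H) ≤
        min (2 * (‖t‖ ^ (2 * H) + ‖t‖)) 8 ∧
    2 * (‖t‖ ^ (2 * H) + 1 - (‖t‖ ^ 2 + 1) ^ H) ≤
        2 * ‖t‖ ^ (2 * H) + 2 - ‖t - e₁‖ ^ (2 * H) - ‖t + e₁‖ ^ (2 * H) ∧
    0 ≤ 2 * (‖t‖ ^ (2 * H) + 1 - (‖t‖ ^ 2 + 1) ^ H) := by
  obtain ⟨hH₀, hH₁⟩ := hH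
  have he : ‖e₁‖ = 1 := by simp [he₁]
  have ht := norm_nonneg t
  have hlower := add_rpow_add_abs_sub_rpow_le_norm_add_rpow_add_norm_sub_rpow hH₀.le hH₁.le t e₁
  have hupper := norm_add_rpow_add_norm_sub_rpow_le hH₀.le hH₁.le t e₁
  rw [he, one_pow] at hupper
  rw [he] at hlower
  have hnear := two_sub_two_mul_le_add_one_rpow_add_abs_sub_one_rpow ht
    (by linarith : 0 ≤ 2 * H) (by linarith)
  have hfar := two_mul_rpow_le_add_one_rpow_add_abs_sub_one_rpow ht (by linarith : 0 ≤ 2 * H)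
  have hsubadd : (‖t‖ ^ 2 + 1) ^ H ≤ ‖t‖ ^ (2 * H) + 1 := by
    rw [rpow_two_mul ht]
    simpa using rpow_add_le_add_rpow (sq_nonneg ‖t‖) zero_le_one hH₀.le hH₁.le
  refine ⟨le_min (by linarith) (by linarith), by linarith, by linarith⟩

end
end
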